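/- For every a ≠ 0, the function ℓ(r) := ((r² + a²)²/(2a²))·arctan(a/r) − r³/(2a) − 5·a·r/6 tends to 0 as r → ∞. Consequently the angular-momentum charge Q_φ = M(v)·a − M′(v)·ℓ(r) of Kerr–Vaidya spacetime converges to the angular momentum L_Kerr = M(v)·a of the stationary Kerr metric in the asymptotically flat region r → ∞. -/

import Mathlib

/-!
With `y = a / r` and `E(y) = arctan y - (y - y³/3)`, so that `|E(y)| ≤ |y|⁵` by the mean value
theorem, one has `ℓ(r) = a³(1 - y²)/(6r) + (r² + a²)² E(y)/(2a²)`: the cubic Taylor polynomial of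
`arctan` cancels exactly the growing terms `r³/(2a) + 5ar/6`, and for `r ≥ |a|` both remaining
terms are `O(|a|³/r)`.
-/

noncomputable section

open Real Filter

/-- The deviation of the angular-momentum Noether charge of Kerr–Vaidya spacetime
from `M(v)·a`, per unit of `M′(v)`. -/
def ellKV (a r : ℝ) : ℝ :=
  (r ^ 2 + a ^ 2) ^ 2 / (2 * a ^ 2) * Real.arctan (a / r) - r ^ 3 / (2 * a) - 5 * a * r / 6

theorem abs_arctan_sub_le (y : ℝ) : |arctan y - (y - y ^ 3 / 3)| ≤ |y| ^ 5 := by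
  have hE : ∀ t, HasDerivAt (fun t => arctan t - (t - t ^ 3 / 3)) (t ^ 4 / (1 + t ^ 2)) t := by
    intro t
    refine ((hasDerivAt_arctan t).sub
      ((hasDerivAt_id' t).sub ((hasDerivAt_pow 3 t).div_const 3))).congr_deriv ?_
    field_simp
    ring
  have hE' : ∀ t ∈ Set.uIcc 0 y, ‖t ^ 4 / (1 + t ^ 2)‖ ≤ |y| ^ 4 := by
    intro t ht
    have ht : |t| ≤ |y| := by simpa using Set.abs_sub_left_of_mem_uIcc ht
    calc ‖t ^ 4 / (1 + t ^ 2)‖ = |t| ^ 4 / (1 + t ^ 2) := by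
          rw [norm_div, norm_pow, Real.norm_eq_abs, Real.norm_of_nonneg (by positivity)]
      _ ≤ |t| ^ 4 := div_le_self (by positivity) (le_add_of_nonneg_right (sq_nonneg t))
      _ ≤ |y| ^ 4 := by gcongr
  have := (convex_uIcc 0 y).norm_image_sub_le_of_norm_hasDerivWithin_le
    (fun t _ => (hE t).hasDerivWithinAt) hE' Set.left_mem_uIcc Set.right_mem_uIcc
  simpa [pow_succ] using this

theorem ellKV_eq {a r : ℝ} (ha : a ≠ 0) (hr : r ≠ 0) :
    ellKV a r = a ^ 3 / (6 * r) * (1 - (a / r) ^ 2) +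
      (r ^ 2 + a ^ 2) ^ 2 / (2 * a ^ 2) * (arctan (a / r) - (a / r - (a / r) ^ 3 / 3)) := by
  unfold ellKV
  field_simp
  ring

theorem abs_ellKV_le (a : ℝ) {r : ℝ} (hr : 0 < r) (har : |a| ≤ r) :
    |ellKV a r| ≤ 3 * |a| ^ 3 / r := by
  rcases eq_or_ne a 0 with rfl | ha
  · -- every term of `ellKV 0 r` vanishes, the two divisions by `0` included
    simp [ellKV]
  have hy : (a / r) ^ 2 ≤ 1 := by
    rwa [sq_le_one_iff_abs_le_one, abs_div, abs_of_pos hr, div_le_one hr]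
  have hpoly : |a ^ 3 / (6 * r) * (1 - (a / r) ^ 2)| ≤ |a| ^ 3 / (6 * r) := by
    have : |1 - (a / r) ^ 2| ≤ 1 := abs_sub_le_of_nonneg_of_le zero_le_one le_rfl (sq_nonneg _) hy
    rw [abs_mul, abs_div, abs_pow, abs_of_pos (by positivity : 0 < 6 * r)]
    exact mul_le_of_le_one_right (by positivity) this
  have hrem : |(r ^ 2 + a ^ 2) ^ 2 / (2 * a ^ 2) * (arctan (a / r) - (a / r - (a / r) ^ 3 / 3))|
      ≤ 2 * |a| ^ 3 / r := by
    have hsq : r ^ 2 + a ^ 2 ≤ 2 * r ^ 2 := by nlinarith [sq_abs a, abs_nonneg a]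
    calc _ = (r ^ 2 + a ^ 2) ^ 2 / (2 * a ^ 2) * |arctan (a / r) - (a / r - (a / r) ^ 3 / 3)| := by
          rw [abs_mul, abs_of_nonneg (by positivity)]
      _ ≤ (2 * r ^ 2) ^ 2 / (2 * a ^ 2) * (|a| ^ 5 / r ^ 5) := by
          gcongr
          simpa [abs_div, abs_of_pos hr, div_pow] using abs_arctan_sub_le (a / r)
      _ = 2 * |a| ^ 3 / r := by
          rw [← sq_abs a]
          field_simp
  calc |ellKV a r| ≤ |a| ^ 3 / (6 * r) + 2 * |a| ^ 3 / r := by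
        rw [ellKV_eq ha hr.ne']
        exact (abs_add_le _ _).trans (add_le_add hpoly hrem)
    _ ≤ 3 * |a| ^ 3 / r := by
        rw [div_add_div _ _ (by positivity) hr.ne', div_le_div_iff₀ (by positivity) hr]
        nlinarith [pow_pos (abs_pos.mpr ha) 3]

theorem ellKV_tendsto_zero_general (a : ℝ) :
    Tendsto (fun r : ℝ => ellKV a r) atTop (nhds 0) ∧
      ∀ (M : ℝ → ℝ) (v : ℝ),
        Tendsto (fun r : ℝ => M v * a - deriv M v * ellKV a r) atTop (nhds (M v * a)) := by
  have hell : Tendsto (fun r : ℝ => ellKV a r) atTop (nhds 0) := by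
    refine squeeze_zero_norm' ?_
      ((tendsto_const_nhds (x := 3 * |a| ^ 3)).div_atTop tendsto_id)
    filter_upwards [eventually_ge_atTop (|a| + 1)] with r hr
    exact abs_ellKV_le a (by linarith [abs_nonneg a]) (by linarith)
  refine ⟨hell, fun M v => ?_⟩
  simpa using tendsto_const_nhds.sub (hell.const_mul (deriv M v))

/-- For every `a ≠ 0`, `ℓ(r) → 0` as `r → ∞`; consequently the angular-momentum charge
`Q_φ = M(v)·a − M′(v)·ℓ(r)` of Kerr–Vaidya spacetime converges to the angular momentum
`L_Kerr = M(v)·a` of the stationary Kerr metric in the asymptotically flat region. -/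
theorem ellKV_tendsto_zero (a : ℝ) (ha : a ≠ 0) :
    Tendsto (fun r : ℝ => ellKV a r) atTop (nhds 0) ∧
      ∀ (M : ℝ → ℝ) (v : ℝ),
        Tendsto (fun r : ℝ => M v * a - deriv M v * ellKV a r) atTop (nhds (M v * a)) :=
  ellKV_tendsto_zero_general a
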